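/- Over the field ℚ, let B be the 8×8 nilpotent Jordan matrix of shape (5,3), i.e. the block-diagonal matrix J(5,3) with Jordan blocks of sizes 5 and 3. Then there exists a nilpotent 8×8 matrix A over ℚ with AB = BA whose shape is (3,3,1,1). -/

import Mathlib

/-!
A nilpotent `A` with `A ^ 3 = 0` has shape `(3,3,1,1)` exactly when `dim ker A = 4` and
`dim ker A ^ 2 = 6`. Each such dimension `c` of an `n × n` matrix is certified by `c` independent
vectors in the kernel and `n - c` independent vectors in the range, via rank–nullity; independence
is witnessed by pivot coordinates on which the vectors restrict to the standard basis.
-/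

/-- A nilpotent `n × n` matrix `A` has shape (Jordan type) given by the multiset of parts `μ`
(a partition of `n` with positive parts) if for every `k ≥ 0` the dimension of the kernel of
`A ^ k` equals `Σ_j min (μ_j, k)`. -/
def hasShape {n : ℕ} {F : Type*} [Field F] (A : Matrix (Fin n) (Fin n) F)
    (μ : Multiset ℕ) : Prop :=
  (∀ i ∈ μ, 0 < i) ∧ μ.sum = n ∧
    ∀ k : ℕ, Module.finrank F (LinearMap.ker ((A ^ k).mulVecLin)) =
      (μ.map (fun m => min m k)).sum

/-- The nilpotent Jordan matrix `J(5,3)` of shape `(5,3)`: the block-diagonal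
matrix with Jordan blocks (with eigenvalue `0`) of sizes 5,3. -/
def B0 : Matrix (Fin 8) (Fin 8) ℚ :=
  Matrix.of fun i j => if (j : ℕ) = (i : ℕ) + 1 ∧ (i : ℕ) ≠ 4 then 1 else 0

open Module LinearMap Matrix

theorem linearIndependent_of_comp_eq_single {K κ ι : Type*} [Semiring K] [DecidableEq κ]
    {v : κ → ι → K} (p : κ → ι) (hp : ∀ i, v i ∘ p = Pi.single i 1) :
    LinearIndependent K v :=
  LinearIndependent.of_comp (funLeft K K p) <| by
    convert Pi.linearIndependent_single_one κ K
    exact hp _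

theorem finrank_ker_eq_of_linearIndependent {K V W : Type*} [DivisionRing K] [AddCommGroup V]
    [Module K V] [FiniteDimensional K V] [AddCommGroup W] [Module K W] (f : V →ₗ[K] W) {c r : ℕ}
    (hcr : c + r = finrank K V) {v : Fin c → V} (hv : LinearIndependent K v)
    (hfv : ∀ i, v i ∈ ker f) {w : Fin r → W} (hw : LinearIndependent K w)
    (hfw : ∀ i, w i ∈ range f) :
    finrank K (ker f) = c := by
  have hker : c ≤ finrank K (ker f) := by
    have := Submodule.finrank_mono (Submodule.span_le.2 (Set.range_subset_iff.2 hfv))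
    rwa [finrank_span_eq_card hv, Fintype.card_fin] at this
  have hrange : r ≤ finrank K (range f) := by
    have := Submodule.finrank_mono (Submodule.span_le.2 (Set.range_subset_iff.2 hfw))
    rwa [finrank_span_eq_card hw, Fintype.card_fin] at this
  have := f.finrank_range_add_finrank_ker
  omega

theorem Matrix.finrank_ker_mulVecLin_eq_of_pivots {K ι ι' : Type*} [Field K] [Fintype ι]
    [DecidableEq ι] [Fintype ι'] (M : Matrix ι' ι K) {c r : ℕ} (hcr : c + r = Fintype.card ι)
    (v : Fin c → ι → K) (pv : Fin c → ι) (hpv : ∀ i, v i ∘ pv = Pi.single i 1)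
    (hMv : ∀ i, M *ᵥ v i = 0)
    (x : Fin r → ι → K) (w : Fin r → ι' → K) (pw : Fin r → ι')
    (hpw : ∀ i, w i ∘ pw = Pi.single i 1)
    (hMx : ∀ i, M *ᵥ x i = w i) :
    finrank K (ker M.mulVecLin) = c :=
  finrank_ker_eq_of_linearIndependent M.mulVecLin (by rwa [finrank_fintype_fun_eq_card])
    (linearIndependent_of_comp_eq_single pv hpv) (fun i => mem_ker.2 (hMv i))
    (linearIndependent_of_comp_eq_single pw hpw) fun i => ⟨x i, hMx i⟩

theorem Matrix.finrank_ker_mulVecLin_pow_of_pow_eq_zero {K : Type*} [Field K] {n m k : ℕ}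
    {A : Matrix (Fin n) (Fin n) K} (hA : A ^ m = 0) (hmk : m ≤ k) :
    finrank K (ker (A ^ k).mulVecLin) = n := by
  rw [pow_eq_zero_of_le hmk hA, Matrix.mulVecLin_zero, ker_zero, finrank_top,
    finrank_fin_fun]

/-- With the standard basis read as the Jordan chains `e₀ ← ⋯ ← e₄`, `f₀ ← f₁ ← f₂` of `B0`,
this is the map commuting with `B0` determined by `e₄ ↦ -e₃ - f₁ - f₂` and `f₂ ↦ e₂ + f₀ + f₁`. -/
def A0 : Matrix (Fin 8) (Fin 8) ℚ :=
  !![0, -1,  0,  0,  0, 1, 0, 0;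
     0,  0, -1,  0,  0, 0, 1, 0;
     0,  0,  0, -1,  0, 0, 0, 1;
     0,  0,  0,  0, -1, 0, 0, 0;
     0,  0,  0,  0,  0, 0, 0, 0;
     0,  0, -1, -1,  0, 0, 1, 1;
     0,  0,  0, -1, -1, 0, 0, 1;
     0,  0,  0,  0, -1, 0, 0, 0]

theorem commute_A0_B0 : Commute A0 B0 := by
  unfold Commute SemiconjBy
  decide +kernel

theorem A0_pow_three : A0 ^ 3 = 0 := by decide +kernel

theorem finrank_ker_A0 : finrank ℚ (ker A0.mulVecLin) = 4 :=
  Matrix.finrank_ker_mulVecLin_eq_of_pivots A0 (c := 4) (r := 4) rfl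
    ![![1, 0, 0, 0, 0, 0, 0, 0], ![0, 1, 0, 0, 0, 1, 0, 0],
      ![0, 0, 1, 0, 0, 0, 1, 0], ![0, 0, 0, 1, 0, 0, 0, 1]]
    ![0, 1, 2, 3] (by decide +kernel) (by decide +kernel)
    ![![0, 0, 0, 0, 0, 1, 0, 0], ![0, 0, 0, 0, 0, 0, 1, 0],
      ![0, 0, 0, 0, 0, 0, 0, 1], ![0, 0, 0, 0, -1, 0, 0, 0]]
    ![![1, 0, 0, 0, 0, 0, 0, 0], ![0, 1, 0, 0, 0, 1, 0, 0],
      ![0, 0, 1, 0, 0, 1, 1, 0], ![0, 0, 0, 1, 0, 0, 1, 1]]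
    ![0, 1, 2, 3] (by decide +kernel) (by decide +kernel)

theorem finrank_ker_A0_sq : finrank ℚ (ker (A0 ^ 2).mulVecLin) = 6 :=
  Matrix.finrank_ker_mulVecLin_eq_of_pivots (A0 ^ 2) (c := 6) (r := 2) rfl
    ![![1, 0, 0, 0, 0, 0, 0, 0], ![0, 1, 0, 0, 0, 0, 0, 0], ![0, 0, 1, 0, 0, 0, 0, 0],
      ![0, 0, 0, 1, 0, 0, 0, 1], ![0, 0, 0, 0, 0, 1, 0, 0], ![0, 0, 0, 0, 0, 0, 1, 0]]
    ![0, 1, 2, 3, 5, 6] (by decide +kernel) (by decide +kernel)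
    ![![0, 0, 0, 0, 0, 0, 0, 1], ![0, 0, 0, 0, -1, 0, 0, 0]]
    ![![1, 0, 0, 0, 0, 0, 0, 0], ![0, 1, 0, 0, 0, 1, 0, 0]]
    ![0, 1] (by decide +kernel) (by decide +kernel)

theorem hasShape_A0 : hasShape A0 {3, 3, 1, 1} := by
  refine ⟨by decide, rfl, fun k => ?_⟩
  match k with
  | 0 => simp
  | 1 => rw [pow_one, finrank_ker_A0]; rfl
  | 2 => rw [finrank_ker_A0_sq]; rfl
  | k + 3 =>
    rw [Matrix.finrank_ker_mulVecLin_pow_of_pow_eq_zero A0_pow_three (by omega)]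
    simp only [Multiset.insert_eq_cons, Multiset.map_cons, Multiset.map_singleton,
      Multiset.sum_cons, Multiset.sum_singleton]
    omega

/-- There is a nilpotent matrix `A` over `ℚ` commuting with `B0 = J(5,3)` whose
shape is `(3,3,1,1)`. -/
theorem stmt_15 :
    ∃ A : Matrix (Fin 8) (Fin 8) ℚ, IsNilpotent A ∧ A * B0 = B0 * A ∧
      hasShape A ({3, 3, 1, 1} : Multiset ℕ) :=
  ⟨A0, ⟨3, A0_pow_three⟩, commute_A0_B0.eq, hasShape_A0⟩
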